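/- If a tree T has Staller-start game domination number γ_g'(T) = 2, then T is a star K_{1,n} for some n ≥ 2, or T is the path P_4. -/

import Mathlib

open Finset

namespace DomGame

variable {V : Type*} [Fintype V] [DecidableEq V]

/-- Closed neighborhood of `v` in `G`, as a `Finset`. -/
noncomputable def cn (G : SimpleGraph V) (v : V) : Finset V :=
  haveI : DecidablePred (fun u : V => u = v ∨ G.Adj v u) := fun _ => Classical.propDecidable _
  Finset.univ.filter (fun u : V => u = v ∨ G.Adj v u)

/-- Value (number of remaining moves, optimal play) of the domination game on `G`,
with fuel, where `D` is the set of already dominated vertices and `who = true`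
means Dominator is to move (minimizing); `who = false` means Staller (maximizing). -/
noncomputable def auxVal (G : SimpleGraph V) : ℕ → Bool → Finset V → ℕ
  | 0, _, _ => 0
  | n + 1, who, D =>
    if D = Finset.univ then 0
    else
      haveI : DecidablePred (fun v : V => ¬ cn G v ⊆ D) := fun _ => Classical.propDecidable _
      let moves : Finset V := Finset.univ.filter (fun v : V => ¬ cn G v ⊆ D)
      if who then
        WithTop.untopD 0 ((moves.image (fun v => 1 + auxVal G n false (D ∪ cn G v))).min)
      else
        moves.sup (fun v => 1 + auxVal G n true (D ∪ cn G v))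

/-- Remaining moves of the domination game on the partially dominated graph `(G, D)`,
Dominator to move, both players optimal. -/
noncomputable def gVal (G : SimpleGraph V) (D : Finset V) : ℕ :=
  auxVal G (Fintype.card V) true D

/-- Remaining moves, Staller to move. -/
noncomputable def gVal' (G : SimpleGraph V) (D : Finset V) : ℕ :=
  auxVal G (Fintype.card V) false D

/-- The game domination number (Dominator starts). -/
noncomputable def gammaG (G : SimpleGraph V) : ℕ := gVal G ∅

/-- The Staller-start game domination number. -/
noncomputable def gammaG' (G : SimpleGraph V) : ℕ := gVal' G ∅

/-- `S` is a dominating set of `G`. -/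
def IsDomSet (G : SimpleGraph V) (S : Finset V) : Prop :=
  ∀ v : V, ∃ u ∈ S, u = v ∨ G.Adj u v

/-- The domination number of `G`. -/
noncomputable def gamma (G : SimpleGraph V) : ℕ :=
  sInf {n | ∃ S : Finset V, IsDomSet G S ∧ S.card = n}

end DomGame

/-!
Staller's opening move `v` leaves a position that Dominator finishes in one move, so every vertex
`v` has a partner `u` with `N[v] ∪ N[u] = V`; and since the game does not end after one move, some
vertex does not dominate the graph alone.

In a connected graph where every vertex has a partner the diameter is at most `3`: the partner of
the vertex two steps along a geodesic of length at least `4` would be within distance one of both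
of its ends. A tree of diameter `2` is a star. In a tree of diameter `3` with diametral path
`a-b-c-d` the ends `a` and `d` are leaves, so the partner of `a` is `c` or `d`; hence every vertex
is `a`, `b` or in `N[c]`, and symmetrically `c`, `d` or in `N[b]`. A common neighbour of `b` and
`c` would close a triangle, so the tree is the path `a-b-c-d`.
-/

namespace SimpleGraph

variable {V : Type*} {G : SimpleGraph V}

lemma exists_adj_dist_eq_of_dist_eq_add_one {x y : V} {k : ℕ} (h : G.dist x y = k + 1) :
    ∃ x', G.Adj x x' ∧ G.dist x' y = k := by
  obtain ⟨p, hp⟩ :=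
    (Reachable.of_dist_ne_zero (by omega : G.dist x y ≠ 0)).exists_walk_length_eq_dist
  cases p with
  | nil => simp at h
  | cons hadj q =>
    have hq := dist_le q
    have htri := hadj.reachable.dist_triangle_left y
    rw [dist_eq_one_iff_adj.2 hadj] at htri
    simp only [Walk.length_cons] at hp
    exact ⟨_, hadj, by omega⟩

lemma three_le_card_of_two_le_dist [Fintype V] {v w : V} (h : 2 ≤ G.dist v w) :
    3 ≤ Fintype.card V := by
  obtain ⟨x, hvx, hxw⟩ :=
    exists_adj_dist_eq_of_dist_eq_add_one (show G.dist v w = (G.dist v w - 1) + 1 by omega)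
  have hvw : v ≠ w := by rintro rfl; simp at h
  have hxw : x ≠ w := by rintro rfl; simp at hxw; omega
  exact Fintype.two_lt_card_iff.2 ⟨v, x, w, hvx.ne, hvw, hxw⟩

lemma Connected.dist_le_one_iff (hG : G.Connected) {u v : V} :
    G.dist u v ≤ 1 ↔ u = v ∨ G.Adj u v := by
  rw [Nat.le_one_iff_eq_zero_or_eq_one, hG.dist_eq_zero_iff, dist_eq_one_iff_adj]

lemma Connected.dist_le_three (hG : G.Connected)
    (hpair : ∀ v, ∃ u, ∀ x, G.dist v x ≤ 1 ∨ G.dist u x ≤ 1) (x y : V) : G.dist x y ≤ 3 := by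
  by_contra! h
  obtain ⟨x₁, hxx₁, hx₁y⟩ := exists_adj_dist_eq_of_dist_eq_add_one
    (show G.dist x y = (G.dist x y - 1) + 1 by omega)
  obtain ⟨m, hx₁m, hmy⟩ := exists_adj_dist_eq_of_dist_eq_add_one
    (show G.dist x₁ y = (G.dist x y - 2) + 1 by omega)
  have hxm : G.dist x m ≤ 2 := by
    have := hG.dist_triangle (u := x) (v := x₁) (w := m)
    rw [dist_eq_one_iff_adj.2 hxx₁, dist_eq_one_iff_adj.2 hx₁m] at this
    exact this
  have hxym := hG.dist_triangle (u := x) (v := m) (w := y)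
  obtain ⟨u, hu⟩ := hpair m
  have hxu : G.dist x u ≤ 1 := by
    rw [dist_comm]
    exact (hu x).resolve_left (by rw [dist_comm]; omega)
  have huy : G.dist u y ≤ 1 := (hu y).resolve_left (by omega)
  have := hG.dist_triangle (u := x) (v := u) (w := y)
  omega

lemma IsTree.dist_le_diam [Finite V] (hG : G.IsTree) (x y : V) : G.dist x y ≤ G.diam :=
  have : Nonempty V := hG.connected.nonempty
  SimpleGraph.dist_le_diam (connected_iff_ediam_ne_top.1 hG.connected)

lemma IsTree.dist_eq_add_one_of_adj_of_adj (hG : G.IsTree) (x : V) {u v w : V}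
    (hv : G.Adj u v) (hw : G.Adj u w) (hvw : v ≠ w) :
    G.dist x v = G.dist x u + 1 ∨ G.dist x w = G.dist x u + 1 := by
  by_contra! h
  have hxv := (hG.dist_eq_dist_add_one_of_adj x hv).resolve_right h.1
  have hxw := (hG.dist_eq_dist_add_one_of_adj x hw).resolve_right h.2
  obtain ⟨p, hp⟩ := (hG.connected x v).exists_walk_length_eq_dist
  obtain ⟨q, hq⟩ := (hG.connected x w).exists_walk_length_eq_dist
  have hpath : ∀ {y} (r : G.Walk x y) (hy : G.Adj y u), r.length = G.dist x y →
      G.dist x u = G.dist x y + 1 → (r.concat hy).IsPath := fun r hy hr hyu =>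
    (r.concat hy).isPath_of_length_eq_dist (by simp [hr, hyu])
  have := (hG.isAcyclic.subsingleton_path x u).elim ⟨_, hpath p hv.symm hp hxv⟩
    ⟨_, hpath q hw.symm hq hxw⟩
  have := congrArg (fun r : G.Path x u => (r : G.Walk x u).penultimate) this
  exact hvw (by simpa using this)

lemma IsTree.not_adj_of_adj_of_adj (hG : G.IsTree) {c x y : V} (hx : G.Adj c x)
    (hy : G.Adj c y) : ¬G.Adj x y := fun hxy =>
  hG.dist_ne_of_adj c hxy (by rw [dist_eq_one_iff_adj.2 hx, dist_eq_one_iff_adj.2 hy])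

lemma IsTree.eq_of_adj_of_dist_eq_diam [Finite V] (hG : G.IsTree) {a b d z : V}
    (had : G.dist a d = G.diam) (hab : G.Adj a b) (hbd : G.dist b d + 1 = G.dist a d)
    (haz : G.Adj a z) : z = b := by
  by_contra hzb
  have := hG.dist_le_diam d z
  have := hG.dist_eq_add_one_of_adj_of_adj d haz hab hzb
  rw [dist_comm (u := d) (v := a), dist_comm (u := d) (v := b)] at this
  omega

lemma IsTree.exists_forall_adj_of_diam_eq_two [Finite V] (hG : G.IsTree) (h : G.diam = 2) :
    ∃ a c d, a ≠ d ∧ G.Adj c a ∧ G.Adj c d ∧ ∀ z, z ≠ c → G.Adj c z := by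
  have : Nonempty V := (nontrivial_of_diam_ne_zero (by omega : G.diam ≠ 0)).to_nonempty
  obtain ⟨a, d, had⟩ := G.exists_dist_eq_diam
  obtain ⟨c, hac, hcd⟩ :=
    exists_adj_dist_eq_of_dist_eq_add_one (show G.dist a d = 1 + 1 by omega)
  have hcd := dist_eq_one_iff_adj.1 hcd
  have hne : a ≠ d := by rintro rfl; simp at had; omega
  refine ⟨a, c, d, hne, hac.symm, hcd, fun z hzc => by_contra fun hcz => ?_⟩
  have hzc := hG.connected.one_lt_dist_of_ne_of_not_adj hzc (mt G.adj_symm hcz)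
  have hfar := hG.dist_eq_add_one_of_adj_of_adj z hac.symm hcd hne
  have := hG.dist_le_diam z a
  have := hG.dist_le_diam z d
  omega

lemma IsTree.nonempty_iso_completeBipartiteGraph [Fintype V] (hG : G.IsTree) {c : V}
    (hc : ∀ x, x ≠ c → G.Adj c x) :
    Nonempty (G ≃g completeBipartiteGraph (Fin 1) (Fin (Fintype.card V - 1))) := by
  classical
  have e : {x // x ≠ c} ≃ Fin (Fintype.card V - 1) := Fintype.equivFinOfCardEq (by
    rw [Fintype.card_subtype_compl, Fintype.card_subtype_eq])
  refine ⟨⟨⟨fun x => if h : x = c then .inl 0 else .inr (e ⟨x, h⟩),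
    Sum.elim (fun _ => c) (fun i => e.symm i), fun x => ?_, ?_⟩, fun {x y} => ?_⟩⟩
  · by_cases h : x = c <;> simp [h]
  · rintro (i | i)
    · simp [Subsingleton.elim 0 i]
    · simp [(e.symm i).2]
  · by_cases hx : x = c <;> by_cases hy : y = c
    · simp [hx, hy]
    · simp [hx, hy, hc]
    · simp [hx, hy, (hc x hx).symm]
    · simp [hx, hy, hG.not_adj_of_adj_of_adj (hc x hx) (hc y hy)]

lemma nonempty_iso_pathGraph_four {a b c d : V} (hab : G.Adj a b) (hbc : G.Adj b c)
    (hcd : G.Adj c d) (hac : G.dist a c = 2) (hbd : G.dist b d = 2) (had : G.dist a d = 3)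
    (huniv : ∀ z, z = a ∨ z = b ∨ z = c ∨ z = d) : Nonempty (G ≃g pathGraph 4) := by
  have hne : ∀ {x y : V}, 2 ≤ G.dist x y → x ≠ y ∧ ¬G.Adj x y := fun h =>
    ⟨by rintro rfl; simp at h, fun hxy => by rw [dist_eq_one_iff_adj.2 hxy] at h; omega⟩
  obtain ⟨hac₁, hac₂⟩ := hne hac.ge
  obtain ⟨hbd₁, hbd₂⟩ := hne hbd.ge
  obtain ⟨had₁, had₂⟩ := hne (by omega : 2 ≤ G.dist a d)
  let f : Fin 4 → V := ![a, b, c, d]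
  have hf : Function.Bijective f := by
    refine ⟨fun i j hij => ?_, fun z => ?_⟩
    · fin_cases i <;> fin_cases j <;>
        simp_all [f, hab.ne, hbc.ne, hcd.ne, hab.ne', hbc.ne', hcd.ne', hac₁.symm, hbd₁.symm,
          had₁.symm]
    · rcases huniv z with rfl | rfl | rfl | rfl
      exacts [⟨0, rfl⟩, ⟨1, rfl⟩, ⟨2, rfl⟩, ⟨3, rfl⟩]
  refine ⟨RelIso.symm ⟨Equiv.ofBijective f hf, fun {i j} => ?_⟩⟩
  fin_cases i <;> fin_cases j <;>
    simp [f, pathGraph_adj, hab, hbc, hcd, hab.symm, hbc.symm, hcd.symm, hac₂, hbd₂, had₂,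
      mt G.adj_symm hac₂, mt G.adj_symm hbd₂, mt G.adj_symm had₂]

lemma IsTree.eq_or_eq_or_dist_le_one [Finite V] (hG : G.IsTree)
    (hpair : ∀ v, ∃ u, ∀ x, G.dist v x ≤ 1 ∨ G.dist u x ≤ 1) {a b c d : V}
    (hab : G.Adj a b) (hcd : G.Adj c d) (hac : G.dist a c = 2) (hbd : G.dist b d = 2)
    (had : G.dist a d = 3) (hdiam : G.diam = 3) (z : V) :
    z = a ∨ z = b ∨ G.dist c z ≤ 1 := by
  have hconn := hG.connected
  have hleaf_d : ∀ y, G.Adj d y → y = c := fun y => hG.eq_of_adj_of_dist_eq_diam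
    (by rw [dist_comm, had, hdiam]) hcd.symm (by rw [dist_comm, hac, dist_comm, had])
  obtain ⟨t, ht⟩ := hpair a
  have htd : t = d ∨ G.Adj t d := hconn.dist_le_one_iff.1 ((ht d).resolve_left (by omega))
  rcases ht z with hz | hz
  · rcases hconn.dist_le_one_iff.1 hz with rfl | haz
    · exact Or.inl rfl
    · exact Or.inr (Or.inl (hG.eq_of_adj_of_dist_eq_diam (had.trans hdiam.symm) hab
        (by omega) haz))
  · right; right
    rcases htd with rfl | htd
    · rcases hconn.dist_le_one_iff.1 hz with rfl | htz
      · exact (dist_eq_one_iff_adj.2 hcd).le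
      · simp [hleaf_d z htz]
    · rwa [← hleaf_d t htd.symm]

lemma IsTree.nonempty_iso_pathGraph_four_of_diam_eq_three [Finite V] (hG : G.IsTree)
    (hpair : ∀ v, ∃ u, ∀ x, G.dist v x ≤ 1 ∨ G.dist u x ≤ 1) (hdiam : G.diam = 3) :
    Nonempty (G ≃g pathGraph 4) := by
  have hconn := hG.connected
  have : Nonempty V := hconn.nonempty
  obtain ⟨a, d, had⟩ := G.exists_dist_eq_diam
  rw [hdiam] at had
  obtain ⟨b, hab, hbd⟩ :=
    exists_adj_dist_eq_of_dist_eq_add_one (show G.dist a d = 2 + 1 by omega)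
  obtain ⟨c, hbc, hcd⟩ :=
    exists_adj_dist_eq_of_dist_eq_add_one (show G.dist b d = 1 + 1 by omega)
  have hcd := dist_eq_one_iff_adj.1 hcd
  have hac : G.dist a c = 2 := by
    have h₁ := hconn.dist_triangle (u := a) (v := b) (w := c)
    have h₂ := hconn.dist_triangle (u := a) (v := c) (w := d)
    rw [dist_eq_one_iff_adj.2 hab, dist_eq_one_iff_adj.2 hbc] at h₁
    rw [dist_eq_one_iff_adj.2 hcd] at h₂
    omega
  refine nonempty_iso_pathGraph_four hab hbc hcd hac hbd had fun z => ?_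
  rcases hG.eq_or_eq_or_dist_le_one hpair hab hcd hac hbd had hdiam z with rfl | rfl | hcz
  · exact Or.inl rfl
  · exact Or.inr (Or.inl rfl)
  rcases hG.eq_or_eq_or_dist_le_one hpair hcd.symm hab.symm (by rwa [dist_comm])
    (by rwa [dist_comm]) (by rwa [dist_comm]) hdiam z with rfl | rfl | hbz
  · exact Or.inr (Or.inr (Or.inr rfl))
  · exact Or.inr (Or.inr (Or.inl rfl))
  rcases hconn.dist_le_one_iff.1 hcz with rfl | hcz
  · exact Or.inr (Or.inr (Or.inl rfl))
  rcases hconn.dist_le_one_iff.1 hbz with rfl | hbz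
  · exact Or.inr (Or.inl rfl)
  exact (hG.not_adj_of_adj_of_adj hbz.symm hcz.symm hbc).elim

theorem IsTree.star_or_pathGraph_four [Fintype V] (hG : G.IsTree)
    (hfar : ∃ v w, 2 ≤ G.dist v w) (hpair : ∀ v, ∃ u, ∀ x, G.dist v x ≤ 1 ∨ G.dist u x ≤ 1) :
    (∃ n : ℕ, 2 ≤ n ∧ Nonempty (G ≃g completeBipartiteGraph (Fin 1) (Fin n))) ∨
      Nonempty (G ≃g pathGraph 4) := by
  obtain ⟨v, w, hvw⟩ := hfar
  have : Nonempty V := ⟨v⟩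
  obtain ⟨x, y, hxy⟩ := G.exists_dist_eq_diam
  have h3 := hxy ▸ hG.connected.dist_le_three hpair x y
  have h2 := hvw.trans (hG.dist_le_diam v w)
  obtain h | h : G.diam = 2 ∨ G.diam = 3 := by omega
  · obtain ⟨a, c, d, had, hca, hcd, hc⟩ := hG.exists_forall_adj_of_diam_eq_two h
    have := Fintype.two_lt_card_iff.2 ⟨a, c, d, hca.ne', had, hcd.ne⟩
    exact Or.inl ⟨_, by omega, hG.nonempty_iso_completeBipartiteGraph hc⟩
  · exact Or.inr (hG.nonempty_iso_pathGraph_four_of_diam_eq_three hpair h)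

end SimpleGraph

namespace DomGame

variable {V : Type*} [Fintype V] {G : SimpleGraph V} {D : Finset V}

lemma mem_cn {u v : V} : u ∈ cn G v ↔ u = v ∨ G.Adj v u := by
  simp [cn]

lemma self_mem_cn (v : V) : v ∈ cn G v := mem_cn.2 (Or.inl rfl)

lemma mem_cn_iff_dist_le_one (hG : G.Connected) {u v : V} : u ∈ cn G v ↔ G.dist v u ≤ 1 := by
  rw [mem_cn, hG.dist_le_one_iff, eq_comm]

-- The `moves` of `auxVal`, with the same decidability instance, so that `auxVal` unfolds to it.
noncomputable def legalMoves (G : SimpleGraph V) (D : Finset V) : Finset V :=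
  haveI : DecidablePred (fun v : V => ¬ cn G v ⊆ D) := fun _ => Classical.propDecidable _
  Finset.univ.filter (fun v : V => ¬ cn G v ⊆ D)

lemma mem_legalMoves {v : V} : v ∈ legalMoves G D ↔ ¬cn G v ⊆ D := by
  simp [legalMoves]

lemma mem_legalMoves_empty (v : V) : v ∈ legalMoves G ∅ :=
  mem_legalMoves.2 fun h => notMem_empty v (h (self_mem_cn v))

lemma legalMoves_nonempty (hD : D ≠ univ) : (legalMoves G D).Nonempty := by
  obtain ⟨v, -, hv⟩ := Finset.exists_of_ssubset (Finset.ssubset_univ_iff.2 hD)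
  exact ⟨v, mem_legalMoves.2 fun h => hv (h (self_mem_cn v))⟩

variable [DecidableEq V]

lemma auxVal_univ (n : ℕ) (who : Bool) : auxVal G n who univ = 0 := by
  cases n <;> simp [auxVal]

lemma auxVal_succ_false (n : ℕ) (hD : D ≠ univ) :
    auxVal G (n + 1) false D =
      (legalMoves G D).sup fun v => 1 + auxVal G n true (D ∪ cn G v) := by
  rw [auxVal, if_neg hD]
  rfl

lemma auxVal_succ_true (n : ℕ) (hD : D ≠ univ) :
    auxVal G (n + 1) true D =
      WithTop.untopD 0
        ((legalMoves G D).image fun v => 1 + auxVal G n false (D ∪ cn G v)).min := by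
  rw [auxVal, if_neg hD]
  rfl

lemma le_auxVal_succ_false {n : ℕ} {v : V} (hD : D ≠ univ) (hv : v ∈ legalMoves G D) :
    1 + auxVal G n true (D ∪ cn G v) ≤ auxVal G (n + 1) false D := by
  rw [auxVal_succ_false n hD]
  exact Finset.le_sup (f := fun v => 1 + auxVal G n true (D ∪ cn G v)) hv

lemma exists_auxVal_succ_false_eq (n : ℕ) (hD : D ≠ univ) :
    ∃ v ∈ legalMoves G D, auxVal G (n + 1) false D = 1 + auxVal G n true (D ∪ cn G v) := by
  rw [auxVal_succ_false n hD]
  exact Finset.exists_mem_eq_sup _ (legalMoves_nonempty hD) _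

lemma exists_auxVal_succ_true_eq (n : ℕ) (hD : D ≠ univ) :
    ∃ v ∈ legalMoves G D, auxVal G (n + 1) true D = 1 + auxVal G n false (D ∪ cn G v) := by
  have hne :=
    (legalMoves_nonempty (G := G) hD).image fun v => 1 + auxVal G n false (D ∪ cn G v)
  rw [auxVal_succ_true n hD, ← Finset.coe_min' hne, WithTop.untopD_coe]
  obtain ⟨v, hv, hmin⟩ := Finset.mem_image.1 (Finset.min'_mem _ hne)
  exact ⟨v, hv, hmin.symm⟩

lemma auxVal_le (n : ℕ) (who : Bool) (D : Finset V) : auxVal G n who D ≤ n := by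
  induction n generalizing who D with
  | zero => simp [auxVal]
  | succ n ih =>
    by_cases hD : D = univ
    · simp [hD, auxVal_univ]
    cases who
    · obtain ⟨v, -, hv⟩ := exists_auxVal_succ_false_eq (G := G) n hD
      have := ih true (D ∪ cn G v)
      omega
    · obtain ⟨v, -, hv⟩ := exists_auxVal_succ_true_eq (G := G) n hD
      have := ih false (D ∪ cn G v)
      omega

lemma exists_cn_ne_univ_of_gammaG'_eq_two (h : gammaG' G = 2) : ∃ v, cn G v ≠ univ := by
  rw [gammaG', gVal'] at h
  have hcard := h ▸ auxVal_le (G := G) (Fintype.card V) false ∅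
  obtain ⟨n, hn⟩ : ∃ n, Fintype.card V = n + 1 + 1 := ⟨Fintype.card V - 2, by omega⟩
  have : Nonempty V := Fintype.card_pos_iff.1 (by omega)
  obtain ⟨v, -, hv⟩ :=
    exists_auxVal_succ_false_eq (G := G) (n + 1) univ_nonempty.ne_empty.symm
  refine ⟨v, fun hv' => ?_⟩
  rw [empty_union, hv', auxVal_univ, ← hn, h] at hv
  omega

lemma exists_cn_union_eq_univ_of_gammaG'_eq_two (h : gammaG' G = 2)
    (hcard : 3 ≤ Fintype.card V) (v : V) : ∃ u, cn G v ∪ cn G u = univ := by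
  by_cases hv : cn G v = univ
  · exact ⟨v, by rw [hv, union_self]⟩
  rw [gammaG', gVal'] at h
  obtain ⟨n, hn⟩ : ∃ n, Fintype.card V = n + 1 + 1 + 1 := ⟨Fintype.card V - 3, by omega⟩
  have : Nonempty V := ⟨v⟩
  have hle := le_auxVal_succ_false (n := n + 1 + 1) univ_nonempty.ne_empty.symm
    (mem_legalMoves_empty (G := G) v)
  rw [← hn, h, empty_union] at hle
  obtain ⟨u, -, hu⟩ := exists_auxVal_succ_true_eq (G := G) (n + 1) hv
  refine ⟨u, by_contra fun hvu => ?_⟩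
  obtain ⟨w, -, hw⟩ := exists_auxVal_succ_false_eq (G := G) n hvu
  omega

end DomGame

/-- a tree with γ_g'(T) = 2 is a star K_{1,n} (n ≥ 2) or the path P_4. -/
theorem stmt10 {V : Type*} [Fintype V] [DecidableEq V] (T : SimpleGraph V)
    (hT : T.IsTree) (h2 : DomGame.gammaG' T = 2) :
    (∃ n : ℕ, 2 ≤ n ∧ Nonempty (T ≃g completeBipartiteGraph (Fin 1) (Fin n))) ∨
      Nonempty (T ≃g SimpleGraph.pathGraph 4) := by
  have hmem : ∀ {v x : V}, x ∈ DomGame.cn T v ↔ T.dist v x ≤ 1 :=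
    DomGame.mem_cn_iff_dist_le_one hT.connected
  obtain ⟨v, hv⟩ := DomGame.exists_cn_ne_univ_of_gammaG'_eq_two h2
  obtain ⟨w, -, hw⟩ := Finset.exists_of_ssubset (Finset.ssubset_univ_iff.2 hv)
  have hvw : 2 ≤ T.dist v w := by
    rw [hmem] at hw
    omega
  refine hT.star_or_pathGraph_four ⟨v, w, hvw⟩ fun x => ?_
  obtain ⟨u, hu⟩ := DomGame.exists_cn_union_eq_univ_of_gammaG'_eq_two h2
    (SimpleGraph.three_le_card_of_two_le_dist hvw) x
  rw [Finset.eq_univ_iff_forall] at hu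
  exact ⟨u, fun y => by simpa [hmem] using hu y⟩
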